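/- arXiv:2305.02442 — 2 statements merged into one kernel-verified Lean document; each statement's English description precedes it below -/
import Mathlib

section
/- For a Boolean network f and a configuration x: if x does not belong to any minimal trap space of f, then there exists a configuration y ∈ c(TS_f(x)) such that c(TS_f(y)) ⊊ c(TS_f(x)). -/
/-- The set of vertices of a subcube `h : Fin n → Option Bool`. -/
def vertices {n : ℕ} (h : Fin n → Option Bool) : Set (Fin n → Bool) :=
  {x | ∀ (i : Fin n) (b : Bool), h i = some b → x i = b}

/-- A subcube `h` is a trap space of the Boolean network `f` if it is closed by `f`. -/
def IsTrapSpace {n : ℕ} (f : (Fin n → Bool) → (Fin n → Bool))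
    (h : Fin n → Option Bool) : Prop :=
  ∀ x ∈ vertices h, f x ∈ vertices h

/-- A trap space is minimal if no trap space has a strictly smaller vertex set. -/
def IsMinimalTrapSpace {n : ℕ} (f : (Fin n → Bool) → (Fin n → Bool))
    (h : Fin n → Option Bool) : Prop :=
  IsTrapSpace f h ∧ ∀ h', IsTrapSpace f h' → ¬ (vertices h' ⊂ vertices h)

/-- `h` is the smallest trap space of `f` containing the configuration `x` (i.e. `TS_f(x)`). -/
def IsSmallestTrapSpace {n : ℕ} (f : (Fin n → Bool) → (Fin n → Bool))
    (x : Fin n → Bool) (h : Fin n → Option Bool) : Prop :=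
  IsTrapSpace f h ∧ x ∈ vertices h ∧
    ∀ h', IsTrapSpace f h' → x ∈ vertices h' → vertices h ⊆ vertices h'

/-- A configuration `x` matches a marker `M`. -/
def confMatches {n : ℕ} (x : Fin n → Bool) (M : Fin n → Option Bool) : Prop :=
  ∀ (i : Fin n) (b : Bool), M i = some b → x i = b

/-- A subcube `h` matches a marker `M`. -/
def subcubeMatches {n : ℕ} (h M : Fin n → Option Bool) : Prop :=
  ∀ (i : Fin n) (b : Bool), M i = some b → h i = some b

/-- The perturbed Boolean network `f/P`. -/
def perturb {n : ℕ} (f : (Fin n → Bool) → (Fin n → Bool))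
    (P : Fin n → Option Bool) : (Fin n → Bool) → (Fin n → Bool) :=
  fun x i => (P i).getD (f x i)

/-!
`TS_f(x)` is not minimal, since `x` lies in it but in no minimal trap space, so it strictly
contains a trap space `T`. Every subcube has a vertex; for any `y ∈ c(T)`, `TS_f(y) ⊆ T`.
Smallest trap spaces exist because the subcubes through a common point are closed under
arbitrary intersection, and an intersection of `f`-invariant sets is `f`-invariant.
-/

open Set

theorem vertices_nonempty {n : ℕ} (h : Fin n → Option Bool) : (vertices h).Nonempty :=
  ⟨fun i => (h i).getD false, fun i b hib => by simp [hib]⟩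

/-- The intersection fixes `i` to `y i` as soon as one member of `S` fixes `i`. -/
theorem exists_vertices_eq_biInter {n : ℕ} (y : Fin n → Bool) (S : Set (Fin n → Option Bool))
    (hy : ∀ h ∈ S, y ∈ vertices h) : ∃ g, vertices g = ⋂ h ∈ S, vertices h := by
  classical
  refine ⟨fun i => if ∃ h ∈ S, (h i).isSome then some (y i) else none, ?_⟩
  ext z
  simp only [vertices, mem_iInter, mem_ofPred_eq]
  constructor
  · intro hz h hS i b hib
    have hfix : (if ∃ h ∈ S, (h i).isSome then some (y i) else none) = some (y i) :=
      if_pos ⟨h, hS, by simp [hib]⟩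
    rw [hz i (y i) hfix, hy h hS i b hib]
  · intro hz i b hib
    split_ifs at hib with hfix
    · obtain ⟨h, hS, hsome⟩ := hfix
      obtain ⟨c, hc⟩ := Option.isSome_iff_exists.mp hsome
      rw [← Option.some.inj hib, hz h hS i c hc, hy h hS i c hc]

theorem exists_isSmallestTrapSpace {n : ℕ} (f : (Fin n → Bool) → (Fin n → Bool))
    (y : Fin n → Bool) : ∃ g, IsSmallestTrapSpace f y g := by
  obtain ⟨g, hg⟩ :=
    exists_vertices_eq_biInter y {h | IsTrapSpace f h ∧ y ∈ vertices h} fun _ hh => hh.2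
  refine ⟨g, ?_, ?_, fun h htrap hy => ?_⟩
  · change MapsTo f (vertices g) (vertices g)
    rw [hg]
    exact mapsTo_iInter₂_iInter₂ fun _ hh => hh.1
  · rw [hg]
    exact mem_iInter₂.2 fun _ hh => hh.2
  · rw [hg]
    exact biInter_subset_of_mem ⟨htrap, hy⟩

/-- if `x` is in no minimal trap space, some `y ∈ c(TS_f(x))` has a
strictly smaller smallest trap space. -/
theorem not_in_minimal_exists_smaller {n : ℕ}
    (f : (Fin n → Bool) → (Fin n → Bool)) (x : Fin n → Bool)
    (tsx : Fin n → Option Bool)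
    (hnot : ¬ ∃ h : Fin n → Option Bool, IsMinimalTrapSpace f h ∧ x ∈ vertices h)
    (htsx : IsSmallestTrapSpace f x tsx) :
    ∃ y ∈ vertices tsx, ∃ tsy : Fin n → Option Bool,
      IsSmallestTrapSpace f y tsy ∧ vertices tsy ⊂ vertices tsx := by
  have hnotmin : ¬ IsMinimalTrapSpace f tsx := fun hmin => hnot ⟨tsx, hmin, htsx.2.1⟩
  obtain ⟨h, htrap, hssub⟩ : ∃ h, IsTrapSpace f h ∧ vertices h ⊂ vertices tsx := by
    by_contra! hcon
    exact hnotmin ⟨htsx.1, hcon⟩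
  obtain ⟨y, hy⟩ := vertices_nonempty h
  obtain ⟨tsy, htsy⟩ := exists_isSmallestTrapSpace f y
  exact ⟨y, hssub.1 hy, tsy, htsy, (htsy.2.2 h htrap hy).trans_ssubset hssub⟩
end

section
/- Correctness of the saturation procedure for computing smallest trap spaces: for a Boolean network f of dimension n and a configuration x, define the sequence of subcubes h^0, h^1, ... by h^0 i = some (x i), and h^{t+1} i = none if there exist b with h^t i = some b and a vertex y ∈ c(h^t) with f_i(y) ≠ b, and h^{t+1} i = h^t i otherwise. Then h^n is the smallest trap space of f containing x: h^n is a trap space of f, x ∈ c(h^n), and c(h^n) ⊆ c(h') for every trap space h' of f with x ∈ c(h'). -/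
open Classical in
/-- The saturation sequence: `satSeq f x 0` is the subcube reduced to `x`, and at each
step a fixed coordinate `i` is freed whenever some vertex `y` of the current subcube
has `f_i(y)` different from the fixed value. -/
noncomputable def satSeq {n : ℕ} (f : (Fin n → Bool) → (Fin n → Bool))
    (x : Fin n → Bool) : ℕ → Fin n → Option Bool
  | 0 => fun i => some (x i)
  | t + 1 => fun i =>
      if ∃ b : Bool, satSeq f x t i = some b ∧ ∃ y ∈ vertices (satSeq f x t), f y i ≠ b
      then none
      else satSeq f x t i

/-!
A saturation step frees exactly the fixed coordinates on which the current subcube is not closed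
under `f`, so its fixed points are the trap spaces. A trap space `h'` containing `x` is never
crossed: as long as the coordinates fixed by `h'` are fixed (to the same values) in the current
subcube, its vertices lie in `c(h')`, where `f` respects those values, so the step keeps them.
Each step that changes the subcube frees at least one of its at most `n` fixed coordinates, hence
the sequence is stationary from step `n` on.
-/

theorem Function.isFixedPt_iterate_of_measure_le {α : Type*} {F : α → α} (μ : α → ℕ)
    (hF : ∀ a, F a ≠ a → μ (F a) < μ a) {k : ℕ} (a : α) (hk : μ a ≤ k) :
    Function.IsFixedPt F (F^[k] a) := by
  induction k generalizing a with
  | zero =>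
    by_contra hne
    have := hF a hne
    omega
  | succ k ih =>
    by_cases hfix : F a = a
    · rw [Function.iterate_fixed hfix]
      exact hfix
    · rw [Function.iterate_succ_apply]
      exact ih (F a) (by have := hF a hfix; omega)

section SatStep

variable {n : ℕ} (f : (Fin n → Bool) → (Fin n → Bool))

open Classical in
noncomputable def satStep (h : Fin n → Option Bool) : Fin n → Option Bool := fun i =>
  if ∃ b : Bool, h i = some b ∧ ∃ y ∈ vertices h, f y i ≠ b then none else h i

def numFixed (h : Fin n → Option Bool) : ℕ :=
  (Finset.univ.filter fun i => (h i).isSome).card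

variable {f}

theorem numFixed_le (h : Fin n → Option Bool) : numFixed h ≤ n :=
  (Finset.card_filter_le _ _).trans_eq (Finset.card_fin n)

theorem vertices_subset_of_subcubeMatches {h h' : Fin n → Option Bool}
    (hm : subcubeMatches h h') : vertices h ⊆ vertices h' :=
  fun _ hy i b hb => hy i b (hm i b hb)

theorem satStep_eq_none_of_ne {h : Fin n → Option Bool} {i : Fin n}
    (hne : satStep f h i ≠ h i) : satStep f h i = none := by
  unfold satStep at hne ⊢
  split_ifs at hne ⊢
  · rfl
  · exact absurd rfl hne

theorem vertices_subset_satStep (h : Fin n → Option Bool) :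
    vertices h ⊆ vertices (satStep f h) := by
  intro y hy i b hb
  by_cases hi : satStep f h i = h i
  · exact hy i b (hi ▸ hb)
  · simp [satStep_eq_none_of_ne hi] at hb

theorem isTrapSpace_of_satStep_eq {h : Fin n → Option Bool} (hfix : satStep f h = h) :
    IsTrapSpace f h := by
  intro y hy i b hb
  by_contra hne
  have hi := congrFun hfix i
  rw [satStep, if_pos ⟨b, hb, y, hy, hne⟩, hb] at hi
  exact Option.some_ne_none b hi.symm

theorem subcubeMatches_satStep {h h' : Fin n → Option Bool} (htrap : IsTrapSpace f h')
    (hm : subcubeMatches h h') : subcubeMatches (satStep f h) h' := by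
  intro i b hb
  have hi := hm i b hb
  rw [satStep, if_neg, hi]
  rintro ⟨c, hc, y, hy, hne⟩
  obtain rfl : b = c := Option.some_inj.mp (hi.symm.trans hc)
  exact hne (htrap y (vertices_subset_of_subcubeMatches hm hy) i b hb)

theorem numFixed_satStep_lt {h : Fin n → Option Bool} (hne : satStep f h ≠ h) :
    numFixed (satStep f h) < numFixed h := by
  have hsub : (Finset.univ.filter fun i => (satStep f h i).isSome) ⊆
      Finset.univ.filter fun i => (h i).isSome := by
    intro i
    by_cases hi : satStep f h i = h i
    · simp [hi]
    · simp [satStep_eq_none_of_ne hi]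
  obtain ⟨i, hi⟩ := Function.ne_iff.mp hne
  have hfreed := satStep_eq_none_of_ne hi
  refine Finset.card_lt_card ((Finset.ssubset_iff_of_subset hsub).mpr ⟨i, ?_, ?_⟩)
  · simpa [Option.isSome_iff_ne_none] using fun hnone => hi (hfreed.trans hnone.symm)
  · simp [hfreed]

end SatStep

section SatSeq

variable {n : ℕ} (f : (Fin n → Bool) → (Fin n → Bool)) (x : Fin n → Bool)

theorem satSeq_eq_iterate (t : ℕ) : satSeq f x t = (satStep f)^[t] (fun i => some (x i)) := by
  induction t with
  | zero => rfl
  | succ t ih => rw [Function.iterate_succ_apply', ← ih]; rfl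

theorem mem_vertices_satSeq (t : ℕ) : x ∈ vertices (satSeq f x t) := by
  induction t with
  | zero => exact fun i b hb => Option.some_inj.mp hb
  | succ t ih => exact vertices_subset_satStep _ ih

theorem satStep_satSeq_self : satStep f (satSeq f x n) = satSeq f x n := by
  rw [satSeq_eq_iterate]
  exact Function.isFixedPt_iterate_of_measure_le numFixed (fun _ => numFixed_satStep_lt) _
    (numFixed_le _)

variable {f x}

theorem subcubeMatches_satSeq {h' : Fin n → Option Bool} (htrap : IsTrapSpace f h')
    (hx : x ∈ vertices h') (t : ℕ) : subcubeMatches (satSeq f x t) h' := by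
  induction t with
  | zero => exact fun i b hb => congrArg some (hx i b hb)
  | succ t ih => exact subcubeMatches_satStep htrap ih

end SatSeq

/-- after `n` saturation steps one obtains the smallest trap space
of `f` containing `x`. -/
theorem satSeq_is_smallest_trap_space {n : ℕ}
    (f : (Fin n → Bool) → (Fin n → Bool)) (x : Fin n → Bool) :
    IsTrapSpace f (satSeq f x n) ∧ x ∈ vertices (satSeq f x n) ∧
      ∀ h' : Fin n → Option Bool, IsTrapSpace f h' → x ∈ vertices h' →
        vertices (satSeq f x n) ⊆ vertices h' :=
  ⟨isTrapSpace_of_satStep_eq (satStep_satSeq_self f x), mem_vertices_satSeq f x n,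
    fun _ htrap hx => vertices_subset_of_subcubeMatches (subcubeMatches_satSeq htrap hx n)⟩
end
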